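/- Let g : ℝ → ℂ be a Schwartz function with g(0) = 0 and g'(0) = 0, and let ν be a finite Borel measure on ℝ with ∫ x² dν(x) < ∞. Then the double integral ∫_ℝ ( ∫_ℝ g(x) e^{-iux} dx ) · ( ∫_ℝ (e^{-iux} - 1 + iux) dν(x) ) du is absolutely convergent and equals 2π ∫_ℝ g(-x) dν(x). -/

import Mathlib

/-!
With `ĝ(u) = ∫ g(x) e^{-iux} dx = 𝓕 g (u / 2π)`, Fourier inversion reads
`∫ ĝ(u) e^{-iux} du = 2π g(-x)`; at `x = 0`, and for `g'` in place of `g`, it gives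
`∫ ĝ = 2π g(0)` and `∫ iu ĝ(u) du = 2π g'(0)`. Hence integrating `ĝ(u)` against the kernel
`e^{-iux} - 1 + iux` yields `2π (g(-x) - g(0) + x g'(0))`, which is `2π g(-x)` under the
hypotheses. The kernel is `O(u²x²)`, and `u² ĝ(u)` is integrable, so Fubini lets us exchange
the `du` and `dν(x)` integrals.
-/

open MeasureTheory Complex FourierTransform Real

noncomputable def fourierAngular (f : ℝ → ℂ) (u : ℝ) : ℂ :=
  ∫ x, f x * exp (-(I * u * x))

noncomputable def levyKhintchineKernel (u x : ℝ) : ℂ :=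
  exp (-(I * u * x)) - 1 + I * u * x

theorem fourierAngular_eq_fourier (f : ℝ → ℂ) (u : ℝ) :
    fourierAngular f u = 𝓕 f (u / (2 * π)) := by
  rw [fourierAngular, Real.fourier_real_eq_integral_exp_smul]
  congr 1 with x
  rw [smul_eq_mul, mul_comm]
  congr 2
  push_cast
  field_simp

theorem fourierAngular_deriv {f : ℝ → ℂ} (hf : Integrable f) (hf_diff : Differentiable ℝ f)
    (hf' : Integrable (deriv f)) (u : ℝ) :
    fourierAngular (deriv f) u = I * u * fourierAngular f u := by
  rw [fourierAngular_eq_fourier, fourierAngular_eq_fourier, Real.fourier_deriv hf hf_diff hf']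
  simp only [smul_eq_mul]
  congr 1
  push_cast
  field_simp

theorem norm_cexp_I_mul_sub_one_sub_le (t : ℝ) : ‖exp (I * t) - 1 - I * t‖ ≤ 2 * t ^ 2 := by
  have hIt : ‖I * t‖ = |t| := by simp
  rcases le_or_gt |t| 1 with ht | ht
  · calc ‖exp (I * t) - 1 - I * t‖ ≤ ‖I * t‖ ^ 2 := norm_exp_sub_one_sub_id_le (hIt ▸ ht)
      _ ≤ 2 * t ^ 2 := by rw [hIt, sq_abs]; nlinarith [sq_nonneg t]
  · calc ‖exp (I * t) - 1 - I * t‖ ≤ ‖exp (I * t) - 1‖ + ‖I * t‖ := norm_sub_le _ _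
      _ ≤ |t| + |t| := by
          rw [hIt]; gcongr; simpa using norm_exp_I_mul_ofReal_sub_one_le (x := t)
      _ ≤ 2 * t ^ 2 := by nlinarith [sq_abs t]

theorem norm_levyKhintchineKernel_le (u x : ℝ) :
    ‖levyKhintchineKernel u x‖ ≤ 2 * (u * x) ^ 2 := by
  convert norm_cexp_I_mul_sub_one_sub_le (-(u * x)) using 2
  · rw [levyKhintchineKernel]; push_cast; ring_nf
  · ring

theorem continuous_levyKhintchineKernel : Continuous (Function.uncurry levyKhintchineKernel) := by
  unfold levyKhintchineKernel Function.uncurry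
  fun_prop

namespace SchwartzMap

theorem fourier_fourier_apply {V E : Type*} [NormedAddCommGroup V] [InnerProductSpace ℝ V]
    [FiniteDimensional ℝ V] [MeasurableSpace V] [BorelSpace V] [NormedAddCommGroup E]
    [NormedSpace ℂ E] [CompleteSpace E] (f : 𝓢(V, E)) (x : V) :
    𝓕 (𝓕 (f : V → E)) x = f (-x) := by
  rw [← neg_neg x, ← fourierInv_eq_fourier_neg, neg_neg,
    f.continuous.fourierInv_fourier_eq f.integrable (𝓕 f).integrable]

variable (g : 𝓢(ℝ, ℂ))

theorem continuous_fourierAngular : Continuous (fourierAngular g) := by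
  simp_rw [funext (fourierAngular_eq_fourier g), ← fourier_coe]
  fun_prop

theorem integrable_ofReal_pow_mul_fourierAngular (n : ℕ) :
    Integrable (fun u : ℝ => (u : ℂ) ^ n * fourierAngular g u) := by
  have h2π : 2 * π ≠ 0 := by positivity
  refine Integrable.mono' ((((𝓕 g).integrable_pow_mul volume n).comp_div h2π).const_mul
    ((2 * π) ^ n)) ((continuous_ofReal.pow n).mul g.continuous_fourierAngular).aestronglyMeasurable
    (.of_forall fun u => le_of_eq ?_)
  rw [fourierAngular_eq_fourier, fourier_coe, norm_mul, norm_pow, norm_real, norm_div,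
    div_pow, Real.norm_of_nonneg (by positivity : 0 ≤ 2 * π)]
  field_simp

theorem integrable_fourierAngular : Integrable (fourierAngular g) := by
  simpa using g.integrable_ofReal_pow_mul_fourierAngular 0

theorem fourierAngular_fourierAngular (x : ℝ) :
    fourierAngular (fourierAngular g) x = 2 * π * g (-x) := by
  have h2π : 0 < 2 * π := by positivity
  set F : ℝ → ℂ := fun ξ => exp (↑(-2 * π * ξ * x) * I) * 𝓕 g ξ
  calc fourierAngular (fourierAngular g) x
      = ∫ u, F (u / (2 * π)) := by
        rw [fourierAngular]
        congr 1 with u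
        rw [fourierAngular_eq_fourier, mul_comm]
        simp only [F]
        congr 2
        push_cast
        field_simp
    _ = 2 * π * 𝓕 (𝓕 (g : ℝ → ℂ)) x := by
        rw [Measure.integral_comp_div F, abs_of_pos h2π, Real.fourier_real_eq_integral_exp_smul,
          real_smul, ofReal_mul, ofReal_ofNat]
        rfl
    _ = 2 * π * g (-x) := by rw [fourier_fourier_apply]

theorem integral_fourierAngular : ∫ u, fourierAngular g u = 2 * π * g 0 := by
  simpa [fourierAngular] using g.fourierAngular_fourierAngular 0

theorem integral_I_mul_mul_fourierAngular :
    ∫ u : ℝ, I * u * fourierAngular g u = 2 * π * deriv g 0 := by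
  simp_rw [← fourierAngular_deriv g.integrable g.differentiable (derivCLM ℝ ℂ g).integrable]
  exact integral_fourierAngular (derivCLM ℝ ℂ g)

theorem integral_fourierAngular_mul_levyKhintchineKernel (x : ℝ) :
    ∫ u : ℝ, fourierAngular g u * levyKhintchineKernel u x =
      2 * π * (g (-x) - g 0 + x * deriv g 0) := by
  have hexp : Integrable (fun u : ℝ => fourierAngular g u * exp (-(I * x * u))) :=
    g.integrable_fourierAngular.mul_bdd (by fun_prop)
      (.of_forall fun u => (by simp [norm_exp] : ‖exp (-(I * x * u))‖ ≤ 1))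
  have hdiff : Integrable (fun u : ℝ =>
      fourierAngular g u * exp (-(I * x * u)) - fourierAngular g u) :=
    hexp.sub g.integrable_fourierAngular
  have hmom : Integrable (fun u : ℝ => x * (I * u * fourierAngular g u)) := by
    simpa [mul_assoc] using (g.integrable_ofReal_pow_mul_fourierAngular 1).const_mul (x * I)
  calc ∫ u : ℝ, fourierAngular g u * levyKhintchineKernel u x
      = ∫ u : ℝ, (fourierAngular g u * exp (-(I * x * u)) - fourierAngular g u) +
          x * (I * u * fourierAngular g u) := by
        congr 1 with u
        rw [levyKhintchineKernel]
        ring_nf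
    _ = fourierAngular (fourierAngular g) x - (∫ u, fourierAngular g u) +
          x * ∫ u : ℝ, I * u * fourierAngular g u := by
        rw [integral_add hdiff hmom, integral_sub hexp g.integrable_fourierAngular,
          integral_const_mul]
        rfl
    _ = 2 * π * (g (-x) - g 0 + x * deriv g 0) := by
        rw [g.fourierAngular_fourierAngular, g.integral_fourierAngular,
          g.integral_I_mul_mul_fourierAngular]
        ring

theorem integrable_fourierAngular_mul_levyKhintchineKernel {ν : Measure ℝ}
    (hν : Integrable (fun x : ℝ => x ^ 2) ν) :
    Integrable (fun p : ℝ × ℝ => fourierAngular g p.1 * levyKhintchineKernel p.1 p.2)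
      (volume.prod ν) := by
  refine Integrable.mono'
    (((g.integrable_ofReal_pow_mul_fourierAngular 2).norm.mul_prod hν).const_mul 2)
    ((g.continuous_fourierAngular.comp continuous_fst).mul
      continuous_levyKhintchineKernel).aestronglyMeasurable
    (.of_forall fun ⟨u, x⟩ => ?_)
  calc ‖fourierAngular g u * levyKhintchineKernel u x‖
      ≤ ‖fourierAngular g u‖ * (2 * (u * x) ^ 2) := by
        rw [norm_mul]; gcongr; exact norm_levyKhintchineKernel_le u x
    _ = 2 * (‖(u : ℂ) ^ 2 * fourierAngular g u‖ * x ^ 2) := by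
        rw [norm_mul, norm_pow, norm_real, Real.norm_eq_abs, sq_abs]; ring

end SchwartzMap

theorem fourier_parseval_identity (g : SchwartzMap ℝ ℂ)
    (hg0 : g 0 = 0) (hg0' : deriv (fun x : ℝ => g x) 0 = 0)
    (ν : Measure ℝ) [IsFiniteMeasure ν]
    (hν : Integrable (fun x : ℝ => x ^ 2) ν) :
    Integrable (fun u : ℝ =>
        (∫ x : ℝ, g x * Complex.exp (-(Complex.I * u * x))) *
          (∫ x : ℝ, (Complex.exp (-(Complex.I * u * x)) - 1 + Complex.I * u * x) ∂ν))
      volume ∧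
    (∫ u : ℝ,
        (∫ x : ℝ, g x * Complex.exp (-(Complex.I * u * x))) *
          (∫ x : ℝ, (Complex.exp (-(Complex.I * u * x)) - 1 + Complex.I * u * x) ∂ν)) =
      (2 * Real.pi : ℂ) * ∫ x : ℝ, g (-x) ∂ν := by
  have hK := g.integrable_fourierAngular_mul_levyKhintchineKernel hν
  change Integrable (fun u => fourierAngular g u * ∫ x, levyKhintchineKernel u x ∂ν) volume ∧
    ∫ u, fourierAngular g u * ∫ x, levyKhintchineKernel u x ∂ν = _
  simp_rw [← integral_const_mul (fourierAngular g _)]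
  refine ⟨hK.integral_prod_left, ?_⟩
  rw [integral_integral_swap hK]
  simp_rw [g.integral_fourierAngular_mul_levyKhintchineKernel, hg0, hg0']
  simp [integral_const_mul]
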